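/- arXiv:1711.07117 — 3 statements merged into one kernel-verified Lean document; each statement's English description precedes it below -/
import Mathlib

section
/- Fix θ ∈ [0, π/2]. Then ‖T x‖ = (cos θ)·‖x‖ holds for every x ∈ W if and only if T(T x) = -(cos θ)²·x holds for every x ∈ W. In other words, W is pointwise slant with slant angle θ if and only if T² = -(cos² θ)·id on W (the Chen–Garay characterization of pointwise slant subspaces, stated at a single point). -/
/-!
`J` is skew-adjoint (an isometry with `J² = -1`), hence so is its compression `T = P_W ∘ J` to
`W`, and then `‖T x‖² = -⟪T (T x), x⟫`. Thus `‖T x‖ = c ‖x‖` for all `x` says that the symmetric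
operator `T² + c²` has vanishing quadratic form, which forces `T² = -c²`. Conversely `T² = -c²`
gives `‖T x‖² = c² ‖x‖²`, and `c = cos θ ≥ 0` allows taking square roots.
-/

open Real RealInnerProductSpace

namespace LinearIsometry

variable {𝕜 E : Type*} [RCLike 𝕜] [NormedAddCommGroup E] [InnerProductSpace 𝕜 E]

theorem inner_map_left_eq_neg_of_map_map (J : E →ₗᵢ[𝕜] E) (hJ : ∀ x, J (J x) = -x) (x y : E) :
    inner 𝕜 (J x) y = -inner 𝕜 x (J y) := by
  rw [← J.inner_map_map x (J y), hJ, inner_neg_right, neg_neg]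

end LinearIsometry

namespace Submodule

variable {𝕜 E : Type*} [RCLike 𝕜] [NormedAddCommGroup E] [InnerProductSpace 𝕜 E]
  (K : Submodule 𝕜 E) [K.HasOrthogonalProjection]

noncomputable def compression (A : E →ₗ[𝕜] E) : K →ₗ[𝕜] K :=
  K.orthogonalProjectionOnto.toLinearMap ∘ₗ A ∘ₗ K.subtype

theorem inner_compression_left_eq_neg {A : E →ₗ[𝕜] E}
    (hA : ∀ x y, inner 𝕜 (A x) y = -inner 𝕜 x (A y)) (x y : K) :
    inner 𝕜 (K.compression A x) y = -inner 𝕜 x (K.compression A y) := by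
  simp [compression, hA]

end Submodule

namespace LinearMap

variable {E : Type*} [NormedAddCommGroup E] [InnerProductSpace ℝ E] {S : E →ₗ[ℝ] E}

theorem norm_sq_apply_eq_neg_inner_apply_apply (hS : ∀ x y, ⟪S x, y⟫ = -⟪x, S y⟫) (x : E) :
    ‖S x‖ ^ 2 = -⟪S (S x), x⟫ := by
  rw [hS, neg_neg, real_inner_self_eq_norm_sq]

theorem norm_apply_eq_mul_norm_iff_apply_apply_eq (hS : ∀ x y, ⟪S x, y⟫ = -⟪x, S y⟫) {c : ℝ}
    (hc : 0 ≤ c) : (∀ x, ‖S x‖ = c * ‖x‖) ↔ ∀ x, S (S x) = -(c ^ 2) • x := by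
  constructor
  · intro h
    set A := S ∘ₗ S + (c ^ 2) • LinearMap.id
    have hA_symm : A.IsSymmetric := fun x y => by
      simp [A, inner_add_left, inner_add_right, real_inner_smul_left, real_inner_smul_right, hS]
    have hA_zero : A = 0 := hA_symm.inner_map_self_eq_zero.mp fun x => by
      have hx := norm_sq_apply_eq_neg_inner_apply_apply hS x
      rw [h, mul_pow, ← real_inner_self_eq_norm_sq] at hx
      simp only [A, add_apply, comp_apply, smul_apply, id_apply, inner_add_left,
        real_inner_smul_left]
      linarith
    intro x
    simpa [A, neg_smul, add_eq_zero_iff_eq_neg] using LinearMap.congr_fun hA_zero x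
  · intro h x
    have hsq : ‖S x‖ ^ 2 = (c * ‖x‖) ^ 2 := by
      rw [norm_sq_apply_eq_neg_inner_apply_apply hS, h, real_inner_smul_left,
        real_inner_self_eq_norm_sq]
      ring
    exact (sq_eq_sq₀ (norm_nonneg _) (by positivity)).mp hsq

end LinearMap

theorem pointwise_slant_iff_Tsq_eq_neg_cos_sq_general
    {V : Type*} [NormedAddCommGroup V] [InnerProductSpace ℝ V]
    (J : V →ₗᵢ[ℝ] V)
    (hJ2 : ∀ x : V, J (J x) = -x)
    (W : Submodule ℝ V) [FiniteDimensional ℝ W]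
    (T : V → V) (hT : ∀ x : V, T x = (Submodule.orthogonalProjectionOnto W (J x) : V))
    (θ : ℝ) (hθ : θ ∈ Set.Icc 0 (π / 2)) :
    (∀ x ∈ W, ‖T x‖ = Real.cos θ * ‖x‖) ↔
      (∀ x ∈ W, T (T x) = (-(Real.cos θ ^ 2)) • x) := by
  set S := W.compression J.toLinearMap
  have hS_skew := W.inner_compression_left_eq_neg (J.inner_map_left_eq_neg_of_map_map hJ2)
  have hcos : 0 ≤ Real.cos θ :=
    Real.cos_nonneg_of_mem_Icc ⟨by linarith [hθ.1, Real.pi_pos], hθ.2⟩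
  have hTS : ∀ x (hx : x ∈ W), T x = S ⟨x, hx⟩ := fun x _ => hT x
  have hTTS : ∀ x (hx : x ∈ W), T (T x) = S (S ⟨x, hx⟩) := fun x hx => by
    rw [hTS x hx, hTS _ (S _).2]
  have key := LinearMap.norm_apply_eq_mul_norm_iff_apply_apply_eq hS_skew hcos
  simp only [Subtype.forall] at key
  refine (forall₂_congr fun x hx => ?_).trans (key.trans (forall₂_congr fun x hx => ?_))
  · rw [hTS x hx]
    rfl
  · rw [hTTS x hx, ← Subtype.coe_inj]
    rfl

/-- **Chen–Garay characterization of pointwise slant subspaces (at a single point).**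
Fix `θ ∈ [0, π/2]`.  Then `‖T x‖ = (cos θ)·‖x‖` for every `x ∈ W` if and only if
`T (T x) = -(cos θ)² • x` for every `x ∈ W`, where `T x = P_W (J x)` is the tangential
part of `J x`. -/
theorem pointwise_slant_iff_Tsq_eq_neg_cos_sq
    {V : Type*} [NormedAddCommGroup V] [InnerProductSpace ℝ V]
    (J : V →ₗᵢ[ℝ] V) (hJsurj : Function.Surjective J)
    (hJ2 : ∀ x : V, J (J x) = -x)
    (W : Submodule ℝ V) [FiniteDimensional ℝ W]
    (T : V → V) (hT : ∀ x : V, T x = (Submodule.orthogonalProjectionOnto W (J x) : V))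
    (θ : ℝ) (hθ : θ ∈ Set.Icc 0 (π / 2)) :
    (∀ x ∈ W, ‖T x‖ = Real.cos θ * ‖x‖) ↔
      (∀ x ∈ W, T (T x) = (-(Real.cos θ ^ 2)) • x) :=
  pointwise_slant_iff_Tsq_eq_neg_cos_sq_general J hJ2 W T hT θ hθ
end

section
/- If W is pointwise slant with slant angle θ ∈ [0, π/2], then ⟨F x, F y⟩ = (sin² θ)·⟨x, y⟩ for all x, y ∈ W; in particular ‖F x‖ = (sin θ)·‖x‖ for every x ∈ W. -/
open Real RealInnerProductSpace

/-! Since `J x = T x + F x` is the orthogonal splitting along `W ⊕ Wᗮ` and `J` preserves inner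
products, `⟪x, y⟫ = ⟪T x, T y⟫ + ⟪F x, F y⟫`. By polarization, `‖T x‖ = cos θ ‖x‖` on `W` gives
`⟪T x, T y⟫ = cos² θ ⟪x, y⟫`, leaving `sin² θ ⟪x, y⟫` for the normal part. -/

theorem LinearMap.inner_map_map_of_norm_map_eq_mul_norm
    {E F : Type*} [NormedAddCommGroup E] [InnerProductSpace ℝ E]
    [NormedAddCommGroup F] [InnerProductSpace ℝ F]
    (f : E →ₗ[ℝ] F) {c : ℝ} (hf : ∀ x, ‖f x‖ = c * ‖x‖) (x y : E) :
    ⟪f x, f y⟫ = c ^ 2 * ⟪x, y⟫ := by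
  simp only [real_inner_eq_norm_add_mul_self_sub_norm_mul_self_sub_norm_mul_self_div_two,
    ← map_add, hf]
  ring

theorem Submodule.inner_eq_inner_starProjection_add_inner_sub_starProjection
    {𝕜 E : Type*} [RCLike 𝕜] [NormedAddCommGroup E] [InnerProductSpace 𝕜 E]
    (K : Submodule 𝕜 E) [K.HasOrthogonalProjection] (v w : E) :
    inner 𝕜 v w = inner 𝕜 (K.starProjection v) (K.starProjection w) +
      inner 𝕜 (v - K.starProjection v) (w - K.starProjection w) := by
  have hv := K.starProjection_inner_eq_zero v _ (K.starProjection_apply_mem w)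
  have hw := K.starProjection_inner_eq_zero w _ (K.starProjection_apply_mem v)
  rw [← inner_conj_symm, map_eq_zero] at hw
  simp only [inner_sub_left, inner_sub_right] at hv hw ⊢
  linear_combination hv + hw

theorem inner_F_F_of_pointwise_slant_general
    {V : Type*} [NormedAddCommGroup V] [InnerProductSpace ℝ V]
    (J : V →ₗᵢ[ℝ] V)
    (W : Submodule ℝ V) [FiniteDimensional ℝ W]
    (T F : V → V) (hT : ∀ x : V, T x = (Submodule.orthogonalProjection W (J x) : V))
    (hF : ∀ x : V, F x = J x - T x)
    (θ : ℝ) (hθ : θ ∈ Set.Icc 0 (π / 2))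
    (hslant : ∀ x ∈ W, ‖T x‖ = Real.cos θ * ‖x‖) :
    (∀ x ∈ W, ∀ y ∈ W, ⟪F x, F y⟫ = Real.sin θ ^ 2 * ⟪x, y⟫) ∧
      (∀ x ∈ W, ‖F x‖ = Real.sin θ * ‖x‖) := by
  have hT' (x : V) : W.starProjection (J x) = T x := (hT x).symm
  let TW : W →ₗ[ℝ] V := W.starProjection.toLinearMap ∘ₗ J.toLinearMap ∘ₗ W.subtype
  have hTT : ∀ x ∈ W, ∀ y ∈ W, ⟪T x, T y⟫ = cos θ ^ 2 * ⟪x, y⟫ := fun x hx y hy => by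
    simpa [TW, hT'] using TW.inner_map_map_of_norm_map_eq_mul_norm
      (fun v => by simpa [TW, hT'] using hslant v v.2) ⟨x, hx⟩ ⟨y, hy⟩
  have hFF : ∀ x ∈ W, ∀ y ∈ W, ⟪F x, F y⟫ = sin θ ^ 2 * ⟪x, y⟫ := fun x hx y hy => by
    have h := W.inner_eq_inner_starProjection_add_inner_sub_starProjection (J x) (J y)
    rw [J.inner_map_map, hT', hT', ← hF, ← hF, hTT x hx y hy] at h
    rw [sin_sq]
    linarith
  refine ⟨hFF, fun x hx => ?_⟩
  have hsin : 0 ≤ sin θ := sin_nonneg_of_nonneg_of_le_pi hθ.1 (hθ.2.trans (by linarith [pi_pos]))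
  rw [← pow_left_inj₀ (norm_nonneg _) (mul_nonneg hsin (norm_nonneg x)) two_ne_zero,
    ← real_inner_self_eq_norm_sq, hFF x hx x hx, real_inner_self_eq_norm_sq]
  ring

/-- If `W` is pointwise slant with slant angle `θ ∈ [0, π/2]`, then
`⟨F x, F y⟩ = (sin² θ)·⟨x, y⟩` for all `x, y ∈ W`; in particular
`‖F x‖ = (sin θ)·‖x‖` for every `x ∈ W`. -/
theorem inner_F_F_of_pointwise_slant
    {V : Type*} [NormedAddCommGroup V] [InnerProductSpace ℝ V]
    (J : V →ₗᵢ[ℝ] V) (hJsurj : Function.Surjective J)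
    (hJ2 : ∀ x : V, J (J x) = -x)
    (W : Submodule ℝ V) [FiniteDimensional ℝ W]
    (T F : V → V) (hT : ∀ x : V, T x = (Submodule.orthogonalProjection W (J x) : V))
    (hF : ∀ x : V, F x = J x - T x)
    (θ : ℝ) (hθ : θ ∈ Set.Icc 0 (π / 2))
    (hslant : ∀ x ∈ W, ‖T x‖ = Real.cos θ * ‖x‖) :
    (∀ x ∈ W, ∀ y ∈ W, ⟪F x, F y⟫ = Real.sin θ ^ 2 * ⟪x, y⟫) ∧
      (∀ x ∈ W, ‖F x‖ = Real.sin θ * ‖x‖) :=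
  inner_F_F_of_pointwise_slant_general J W T F hT hF θ hθ hslant
end

section
/- Suppose in addition that ‖P₁(J x)‖ = (cos θ₁)·‖x‖ for every x ∈ D₁ and ‖P₂(J z)‖ = (cos θ₂)·‖z‖ for every z ∈ D₂, where θ₁, θ₂ ∈ [0, π/2] (i.e., D₁ and D₂ are pointwise slant with slant angles θ₁ and θ₂, making W pointwise bi-slant). Then T(T x) = -(cos² θ₁)·x for every x ∈ D₁ and T(T z) = -(cos² θ₂)·z for every z ∈ D₂. -/
/-!
Because the projections onto `D₁` and `D₂` are decoupled by the hypotheses on `J`, `T` restricts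
to `P := P_D ∘ J` on each `D = Dᵢ`. By polarization the slant condition `‖P x‖ = cos θ ‖x‖` gives
`⟪P x, P y⟫ = cos² θ ⟪x, y⟫`, while skew-symmetry of `J` gives `⟪P (P x), y⟫ = -⟪P x, P y⟫`
for `x, y ∈ D`. Hence `P (P x) + cos² θ • x ∈ D` is orthogonal to `D`, so it vanishes.
-/

open Real RealInnerProductSpace

section BiSlant

variable {V : Type*} [NormedAddCommGroup V] [InnerProductSpace ℝ V]

theorem LinearIsometry.inner_map_left_eq_neg_of_map_map_eq_neg (J : V →ₗᵢ[ℝ] V)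
    (hJ2 : ∀ x : V, J (J x) = -x) (a b : V) : ⟪J a, b⟫ = -⟪a, J b⟫ := by
  rw [← J.inner_map_map a (J b), hJ2, inner_neg_right, neg_neg]

theorem Submodule.starProjection_sup_apply_of_isOrtho {D D' : Submodule ℝ V}
    [D.HasOrthogonalProjection] [(D ⊔ D').HasOrthogonalProjection] (hDD' : D ⟂ D') {v : V}
    (hv : v ∈ D'ᗮ) : (D ⊔ D').starProjection v = D.starProjection v := by
  refine eq_starProjection_of_mem_orthogonal (mem_sup_left (D.starProjection_apply_mem v)) ?_
  rw [← inf_orthogonal]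
  exact ⟨D.sub_starProjection_mem_orthogonal v,
    D'ᗮ.sub_mem hv (isOrtho_iff_le.1 hDD' (D.starProjection_apply_mem v))⟩

section Slant

variable (J : V →ₗᵢ[ℝ] V) {D : Submodule ℝ V} [D.HasOrthogonalProjection] {c : ℝ}

theorem inner_starProjection_map_of_norm_eq
    (hslant : ∀ x ∈ D, ‖D.starProjection (J x)‖ = c * ‖x‖) {x y : V} (hx : x ∈ D) (hy : y ∈ D) :
    ⟪D.starProjection (J x), D.starProjection (J y)⟫ = c ^ 2 * ⟪x, y⟫ := by
  rw [real_inner_eq_norm_add_mul_self_sub_norm_mul_self_sub_norm_mul_self_div_two,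
    real_inner_eq_norm_add_mul_self_sub_norm_mul_self_sub_norm_mul_self_div_two x y,
    ← map_add, ← map_add, hslant x hx, hslant y hy, hslant (x + y) (D.add_mem hx hy)]
  ring

theorem starProjection_map_starProjection_map_of_norm_eq (hJ2 : ∀ x : V, J (J x) = -x)
    (hslant : ∀ x ∈ D, ‖D.starProjection (J x)‖ = c * ‖x‖) {x : V} (hx : x ∈ D) :
    D.starProjection (J (D.starProjection (J x))) = -(c ^ 2) • x := by
  set P : V → V := fun v => D.starProjection (J v)
  have hP : ∀ v, P v ∈ D := fun v => D.starProjection_apply_mem (J v)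
  have inner_P : ∀ v, ∀ y ∈ D, ⟪J v, y⟫ = ⟪P v, y⟫ := fun v y hy => by
    rw [← sub_eq_zero, ← inner_sub_left]
    exact D.starProjection_inner_eq_zero (J v) y hy
  have hortho : ∀ y ∈ D, ⟪P (P x) + c ^ 2 • x, y⟫ = 0 := by
    intro y hy
    rw [inner_add_left, ← inner_P _ y hy, J.inner_map_left_eq_neg_of_map_map_eq_neg hJ2,
      real_inner_comm, inner_P y _ (hP x), real_inner_comm,
      inner_starProjection_map_of_norm_eq J hslant hx hy, real_inner_smul_left]
    ring
  have hzero : P (P x) + c ^ 2 • x = 0 :=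
    inner_self_eq_zero.1 (hortho _ (D.add_mem (hP _) (D.smul_mem _ hx)))
  rw [neg_smul]
  exact eq_neg_of_add_eq_zero_left hzero

end Slant

theorem starProjection_map_starProjection_map_of_eq_sup (J : V →ₗᵢ[ℝ] V)
    (hJ2 : ∀ x : V, J (J x) = -x) {W D D' : Submodule ℝ V} [W.HasOrthogonalProjection]
    [D.HasOrthogonalProjection] (hW : W = D ⊔ D') (hDD' : D ⟂ D') (hJD : ∀ x ∈ D, J x ∈ D'ᗮ)
    {c : ℝ} (hslant : ∀ x ∈ D, ‖D.starProjection (J x)‖ = c * ‖x‖) {x : V} (hx : x ∈ D) :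
    W.starProjection (J (W.starProjection (J x))) = -(c ^ 2) • x := by
  have hWD : ∀ x ∈ D, W.starProjection (J x) = D.starProjection (J x) := by
    subst hW
    exact fun x hx => Submodule.starProjection_sup_apply_of_isOrtho hDD' (hJD x hx)
  rw [hWD x hx, hWD _ (D.starProjection_apply_mem _)]
  exact starProjection_map_starProjection_map_of_norm_eq J hJ2 hslant hx

end BiSlant

theorem T_sq_on_bi_slant_distributions_general
    {V : Type*} [NormedAddCommGroup V] [InnerProductSpace ℝ V]
    (J : V →ₗᵢ[ℝ] V)
    (hJ2 : ∀ x : V, J (J x) = -x)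
    (W : Submodule ℝ V) [FiniteDimensional ℝ W]
    (T : V → V) (hT : ∀ x : V, T x = (W.orthogonalProjectionOnto (J x) : V))
    (D₁ D₂ : Submodule ℝ V) [FiniteDimensional ℝ D₁] [FiniteDimensional ℝ D₂]
    (hW : W = D₁ ⊔ D₂)
    (horth : ∀ x ∈ D₁, ∀ z ∈ D₂, ⟪x, z⟫ = 0)
    (hJ12 : ∀ x ∈ D₁, ∀ z ∈ D₂, ⟪J x, z⟫ = 0)
    (hJ21 : ∀ z ∈ D₂, ∀ x ∈ D₁, ⟪J z, x⟫ = 0)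
    (θ₁ θ₂ : ℝ)
    (hslant₁ : ∀ x ∈ D₁, ‖(D₁.orthogonalProjectionOnto (J x) : V)‖ = Real.cos θ₁ * ‖x‖)
    (hslant₂ : ∀ z ∈ D₂, ‖(D₂.orthogonalProjectionOnto (J z) : V)‖ = Real.cos θ₂ * ‖z‖) :
    (∀ x ∈ D₁, T (T x) = (-(Real.cos θ₁ ^ 2)) • x) ∧
      (∀ z ∈ D₂, T (T z) = (-(Real.cos θ₂ ^ 2)) • z) := by
  have h₁₂ : D₁ ⟂ D₂ := fun x hx z hz => inner_eq_zero_symm.1 (horth x hx z hz)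
  have hJ₁ : ∀ x ∈ D₁, J x ∈ D₂ᗮ := fun x hx => (Submodule.mem_orthogonal' D₂ _).2 (hJ12 x hx)
  have hJ₂ : ∀ z ∈ D₂, J z ∈ D₁ᗮ := fun z hz => (Submodule.mem_orthogonal' D₁ _).2 (hJ21 z hz)
  simp only [hT, Submodule.coe_orthogonalProjectionOnto_apply] at hslant₁ hslant₂ ⊢
  exact ⟨fun x hx => starProjection_map_starProjection_map_of_eq_sup J hJ2 hW h₁₂ hJ₁ hslant₁ hx,
    fun z hz => starProjection_map_starProjection_map_of_eq_sup J hJ2 (hW.trans (sup_comm _ _))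
      h₁₂.symm hJ₂ hslant₂ hz⟩

/-- Suppose the pointwise bi-slant decomposition `W = D₁ ⊕ D₂` has
`‖P₁ (J x)‖ = (cos θ₁)·‖x‖` on `D₁` and `‖P₂ (J z)‖ = (cos θ₂)·‖z‖` on `D₂` with
`θ₁, θ₂ ∈ [0, π/2]`.  Then `T (T x) = -(cos² θ₁) • x` for every `x ∈ D₁` and
`T (T z) = -(cos² θ₂) • z` for every `z ∈ D₂`. -/
theorem T_sq_on_bi_slant_distributions
    {V : Type*} [NormedAddCommGroup V] [InnerProductSpace ℝ V]
    (J : V →ₗᵢ[ℝ] V) (hJsurj : Function.Surjective J)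
    (hJ2 : ∀ x : V, J (J x) = -x)
    (W : Submodule ℝ V) [FiniteDimensional ℝ W]
    (T : V → V) (hT : ∀ x : V, T x = (W.orthogonalProjectionOnto (J x) : V))
    (D₁ D₂ : Submodule ℝ V) [FiniteDimensional ℝ D₁] [FiniteDimensional ℝ D₂]
    (hW : W = D₁ ⊔ D₂)
    (horth : ∀ x ∈ D₁, ∀ z ∈ D₂, ⟪x, z⟫ = 0)
    (hJ12 : ∀ x ∈ D₁, ∀ z ∈ D₂, ⟪J x, z⟫ = 0)
    (hJ21 : ∀ z ∈ D₂, ∀ x ∈ D₁, ⟪J z, x⟫ = 0)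
    (θ₁ θ₂ : ℝ) (hθ₁ : θ₁ ∈ Set.Icc 0 (π / 2)) (hθ₂ : θ₂ ∈ Set.Icc 0 (π / 2))
    (hslant₁ : ∀ x ∈ D₁, ‖(D₁.orthogonalProjectionOnto (J x) : V)‖ = Real.cos θ₁ * ‖x‖)
    (hslant₂ : ∀ z ∈ D₂, ‖(D₂.orthogonalProjectionOnto (J z) : V)‖ = Real.cos θ₂ * ‖z‖) :
    (∀ x ∈ D₁, T (T x) = (-(Real.cos θ₁ ^ 2)) • x) ∧
      (∀ z ∈ D₂, T (T z) = (-(Real.cos θ₂ ^ 2)) • z) :=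
  T_sq_on_bi_slant_distributions_general J hJ2 W T hT D₁ D₂ hW horth hJ12 hJ21 θ₁ θ₂ hslant₁ hslant₂
end
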